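/- arXiv:2312.02539 — 4 statements merged into one kernel-verified Lean document; each statement's English description precedes it below -/
import Mathlib

section
/- Let G be a topological group, φ an automorphism of G, and H a proper open subgroup of G such that g H φ(g)⁻¹ = H for all g ∈ G. Then G does not have the φ-twisted Rokhlin property, i.e., no φ-twisted conjugacy class is dense in G. -/
/-- If `G` has a proper open subgroup `H` with `g H φ(g)⁻¹ = H` for all `g`, then no
`φ`-twisted conjugacy class is dense in `G`. -/
theorem stmt_4 {G : Type*} [Group G] [TopologicalSpace G] [IsTopologicalGroup G]
    (φ : G ≃* G) (H : Subgroup G) (hopen : IsOpen (H : Set G)) (hproper : H ≠ ⊤)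
    (hinv : ∀ g : G, {y : G | ∃ h ∈ H, y = g * h * (φ g)⁻¹} = (H : Set G)) :
    ∀ x : G, ¬ Dense {y : G | ∃ g : G, y = g * x * (φ g)⁻¹} := by
  intro x hd
  have hmem : ∀ g h : G, h ∈ H → g * h * (φ g)⁻¹ ∈ H := by
    intro g h hh
    have : g * h * (φ g)⁻¹ ∈ {y : G | ∃ h ∈ H, y = g * h * (φ g)⁻¹} := ⟨h, hh, rfl⟩
    rw [hinv g] at this
    exact this
  have hgφ : ∀ g : G, g * (φ g)⁻¹ ∈ H := by
    intro g
    simpa using hmem g 1 H.one_mem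
  have hnorm : ∀ g h : G, h ∈ H → g * h * g⁻¹ ∈ H := by
    intro g h hh
    have h2 : φ g * g⁻¹ ∈ H := by simpa using H.inv_mem (hgφ g)
    have := H.mul_mem (hmem g h hh) h2
    simpa [mul_assoc] using this
  by_cases hx : x ∈ H
  · -- class ⊆ H; pick y ∉ H, coset y*H is open, nonempty, disjoint from class
    obtain ⟨y, hy⟩ : ∃ y : G, y ∉ H := by
      by_contra hc
      push_neg at hc
      exact hproper ((Subgroup.eq_top_iff' H).mpr hc)
    have hUopen : IsOpen ((fun z => y⁻¹ * z) ⁻¹' (H : Set G)) :=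
      hopen.preimage (continuous_const.mul continuous_id)
    obtain ⟨z, hz2, hz1⟩ := hd.exists_mem_open hUopen ⟨y, by simp [H.one_mem]⟩
    obtain ⟨g, rfl⟩ := hz2
    have hzH : g * x * (φ g)⁻¹ ∈ H := hmem g x hx
    have h5 : y⁻¹ ∈ H := by
      simpa [mul_assoc] using H.mul_mem (hz1 : y⁻¹ * (g * x * (φ g)⁻¹) ∈ H) (H.inv_mem hzH)
    exact hy (by simpa using H.inv_mem h5)
  · -- class disjoint from H
    obtain ⟨z, hz2, hz1⟩ := hd.exists_mem_open hopen ⟨1, H.one_mem⟩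
    obtain ⟨g, rfl⟩ := hz2
    have hz : g * x * (φ g)⁻¹ ∈ H := hz1
    have h2 : φ g * g⁻¹ ∈ H := by simpa using H.inv_mem (hgφ g)
    have h3 : (g * x * (φ g)⁻¹) * (φ g * g⁻¹) ∈ H := H.mul_mem hz h2
    have h4 : g * x * g⁻¹ ∈ H := by simpa [mul_assoc] using h3
    have : x ∈ H := by
      have := hnorm g⁻¹ _ h4
      simpa [mul_assoc] using this
    exact hx this
end

section
/- Let G be a Polish topological group (separable and completely metrizable) and φ an automorphism of the underlying abstract group such that for every g ∈ G the map x ↦ g x φ(g)⁻¹ is a homeomorphism of G. If G has the φ-twisted joint embedding property (for any two nonempty open sets U, V ⊆ G there exists g ∈ G with U ∩ gVφ(g)⁻¹ ≠ ∅), then G has a dense φ-twisted conjugacy class. -/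
/-- For a Polish group, the `φ`-twisted joint embedding property implies the existence
of a dense `φ`-twisted conjugacy class. -/
theorem stmt_7 {G : Type*} [Group G] [TopologicalSpace G] [IsTopologicalGroup G]
    [PolishSpace G] (φ : G ≃* G)
    (hhomeo : ∀ g : G, ∃ e : G ≃ₜ G, ∀ x : G, e x = g * x * (φ g)⁻¹)
    (hTJEP : ∀ U V : Set G, IsOpen U → IsOpen V → U.Nonempty → V.Nonempty →
      ∃ g : G, (U ∩ {y : G | ∃ v ∈ V, y = g * v * (φ g)⁻¹}).Nonempty) :
    ∃ x : G, Dense {y : G | ∃ g : G, y = g * x * (φ g)⁻¹} := by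
  letI := TopologicalSpace.upgradeIsCompletelyMetrizable G
  obtain ⟨B, hBc, hBne, hB⟩ := TopologicalSpace.exists_countable_basis G
  -- For each basic open set s, the set of x whose twisted class meets s
  set D : Set G → Set G := fun s => {x : G | ∃ g : G, g * x * (φ g)⁻¹ ∈ s} with hD
  have hDopen : ∀ s ∈ B, IsOpen (D s) := by
    intro s hs
    have : D s = ⋃ g : G, (fun x => g * x * (φ g)⁻¹) ⁻¹' s := by
      ext x; simp [hD, Set.mem_iUnion]
    rw [this]
    refine isOpen_iUnion fun g => ?_
    obtain ⟨e, he⟩ := hhomeo g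
    have : (fun x => g * x * (φ g)⁻¹) = ⇑e := by funext x; rw [he]
    rw [this]
    exact (hB.isOpen hs).preimage e.continuous
  have hDdense : ∀ s ∈ B, Dense (D s) := by
    intro s hs
    rw [dense_iff_inter_open]
    intro V hV hVne
    have hsne : s.Nonempty := Set.nonempty_iff_ne_empty.2 (by rintro rfl; exact hBne hs)
    obtain ⟨g, y, hys, v, hvV, rfl⟩ := hTJEP s V (hB.isOpen hs) hV hsne hVne
    exact ⟨v, hvV, g, hys⟩
  have hdense : Dense (⋂ s ∈ B, D s) :=
    dense_biInter_of_isOpen hDopen hBc hDdense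
  obtain ⟨x, hx⟩ := hdense.nonempty
  refine ⟨x, hB.dense_iff.2 fun o ho hone => ?_⟩
  have hxo : x ∈ D o := by
    have := Set.mem_iInter₂.1 hx o ho
    exact this
  obtain ⟨g, hg⟩ := hxo
  exact ⟨g * x * (φ g)⁻¹, hg, g, rfl⟩
end

section
/- Let G be a second countable Baire topological group, φ an automorphism of the abstract group G such that each map x ↦ g x φ(g)⁻¹ (g ∈ G) is a homeomorphism. For each open set U in a fixed countable basis B, set D_U = ⋃_{g∈G} gUφ(g)⁻¹. If every D_U (for nonempty U ∈ B) is dense, then D = ⋂_{U∈B, U≠∅} D_U is dense, and every x ∈ D has dense φ-twisted conjugacy class. -/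
/-- Baire-category argument: if every `D_U = ⋃ g, g U φ(g)⁻¹` over a countable basis is
dense, then `D = ⋂ D_U` is dense and each of its points has dense `φ`-twisted
conjugacy class. -/
theorem stmt_14 {G : Type*} [Group G] [TopologicalSpace G] [IsTopologicalGroup G]
    [SecondCountableTopology G] [BaireSpace G] (φ : G ≃* G)
    (hhomeo : ∀ g : G, ∃ e : G ≃ₜ G, ∀ x : G, e x = g * x * (φ g)⁻¹)
    (B : Set (Set G)) (hB : TopologicalSpace.IsTopologicalBasis B) (hBc : B.Countable)
    (hdense : ∀ U ∈ B, U.Nonempty →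
      Dense (⋃ g : G, {y : G | ∃ u ∈ U, y = g * u * (φ g)⁻¹})) :
    Dense (⋂ U ∈ {U ∈ B | U.Nonempty},
        ⋃ g : G, {y : G | ∃ u ∈ U, y = g * u * (φ g)⁻¹}) ∧
    ∀ x ∈ ⋂ U ∈ {U ∈ B | U.Nonempty},
        ⋃ g : G, {y : G | ∃ u ∈ U, y = g * u * (φ g)⁻¹},
      Dense {y : G | ∃ g : G, y = g * x * (φ g)⁻¹} := by
  have hopen : ∀ U ∈ {U ∈ B | U.Nonempty},
      IsOpen (⋃ g : G, {y : G | ∃ u ∈ U, y = g * u * (φ g)⁻¹}) := by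
    intro U hU
    refine isOpen_iUnion fun g => ?_
    obtain ⟨e, he⟩ := hhomeo g
    have : {y : G | ∃ u ∈ U, y = g * u * (φ g)⁻¹} = e '' U := by
      ext y
      simp only [Set.mem_image, Set.mem_setOf_eq]
      constructor
      · rintro ⟨u, hu, rfl⟩; exact ⟨u, hu, he u⟩
      · rintro ⟨u, hu, rfl⟩; exact ⟨u, hu, he u⟩
    rw [this]
    exact e.isOpenMap U (hB.isOpen hU.1)
  refine ⟨dense_biInter_of_isOpen hopen (hBc.mono (Set.sep_subset _ _))
      (fun U hU => hdense U hU.1 hU.2), ?_⟩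
  intro x hx
  rw [hB.dense_iff]
  intro U hU hUne
  have hxU : x ∈ ⋃ g : G, {y : G | ∃ u ∈ U, y = g * u * (φ g)⁻¹} :=
    Set.mem_iInter₂.mp hx U ⟨hU, hUne⟩
  obtain ⟨_, ⟨g, rfl⟩, u, hu, hxu⟩ := hxU
  refine ⟨u, hu, g⁻¹, ?_⟩
  rw [hxu]
  simp [mul_assoc]
end

section
/- Let G be a topological group with the property that for any two nonempty open subsets U, V of G there exists g ∈ G with U ∩ gVg⁻¹ ≠ ∅ (the joint embedding property). If G is Polish, then G contains a dense conjugacy class. -/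
/-- A Polish group with the joint embedding property contains a dense conjugacy
class. -/
theorem stmt_19 {G : Type*} [Group G] [TopologicalSpace G] [IsTopologicalGroup G]
    [PolishSpace G]
    (hJEP : ∀ U V : Set G, IsOpen U → IsOpen V → U.Nonempty → V.Nonempty →
      ∃ g : G, (U ∩ {y : G | ∃ v ∈ V, y = g * v * g⁻¹}).Nonempty) :
    ∃ x : G, Dense {y : G | ∃ g : G, y = g * x * g⁻¹} := by
  letI := TopologicalSpace.upgradeIsCompletelyMetrizable G
  set B := TopologicalSpace.countableBasis G with hB
  haveI : Countable B := (TopologicalSpace.countable_countableBasis G).to_subtype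
  set D : B → Set G := fun U => {x : G | ∃ g : G, g * x * g⁻¹ ∈ (U : Set G)} with hD
  have hDopen : ∀ U : B, IsOpen (D U) := by
    intro U
    have : D U = ⋃ g : G, (fun x => g * x * g⁻¹) ⁻¹' (U : Set G) := by
      ext x; simp [hD, Set.mem_iUnion]
    rw [this]
    exact isOpen_iUnion fun g =>
      ((TopologicalSpace.isOpen_of_mem_countableBasis U.2).preimage (by continuity))
  have hDdense : ∀ U : B, Dense (D U) := by
    intro U
    rw [dense_iff_inter_open]
    intro V hV hVne
    have hUopen := TopologicalSpace.isOpen_of_mem_countableBasis U.2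
    have hUne : (U : Set G).Nonempty := by
      rcases Set.eq_empty_or_nonempty (U : Set G) with h | h
      · exact absurd (h ▸ U.2) (TopologicalSpace.empty_notMem_countableBasis G)
      · exact h
    obtain ⟨g, y, hyU, v, hvV, hyv⟩ := hJEP (U : Set G) V hUopen hV hUne hVne
    exact ⟨v, hvV, ⟨g, by rw [← hyv]; exact hyU⟩⟩
  obtain ⟨x, hx⟩ := (dense_iInter_of_isOpen hDopen hDdense).nonempty
  refine ⟨x, ?_⟩
  rw [dense_iff_inter_open]
  intro V hV hVne
  obtain ⟨U, hUB, hUV, hUsub⟩ :=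
    (TopologicalSpace.isBasis_countableBasis G).exists_subset_of_mem_open hVne.choose_spec hV
  have hxU : x ∈ D ⟨U, hUB⟩ := Set.mem_iInter.mp hx ⟨U, hUB⟩
  obtain ⟨g, hg⟩ := hxU
  exact ⟨g * x * g⁻¹, hUsub hg, g, rfl⟩
end
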